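/- arXiv:2602.13063 — 5 statements merged into one kernel-verified Lean document; each statement's English description precedes it below -/
import Mathlib

section
/- Mirror descent on ℒ(θ) = KL(y, A e^θ) with mirror map 𝒜(θ) = Σ_{i,j} A_{ij} e^{θ_j} and step size 1, i.e., θ^{(r+1)} = (∇𝒜)^{-1}(∇𝒜(θ^{(r)}) - ∇ℒ(θ^{(r)})), is equivalent under the reparametrization x = e^θ to the EMML iteration x^{(r+1)}_j = x^{(r)}_j · (Σᵢ A_{ij} yᵢ/(Ax^{(r)})ᵢ) / (Σᵢ A_{ij}). -/
open Real Finset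

/-- Mirror descent on ℒ(θ) = KL(y, Ae^θ) with mirror map 𝒜(θ) = Σⱼ wⱼe^{θⱼ} and step 1:
if ∇𝒜(θ') = ∇𝒜(θ) - ∇ℒ(θ) componentwise, then under x = e^θ the new point x' = e^{θ'}
is exactly the EMML update x'ⱼ = xⱼ · (Σᵢ Aᵢⱼ yᵢ/(Ax)ᵢ)/wⱼ. -/
theorem mirror_descent_eq_EMML {m n : ℕ} (A : Matrix (Fin m) (Fin n) ℝ) (y : Fin m → ℝ)
    (hA : ∀ i j, 0 ≤ A i j) (hrow : ∀ i, ∃ j, 0 < A i j) (hcol : ∀ j, ∃ i, 0 < A i j)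
    (hy : ∀ i, 0 ≤ y i)
    (w : Fin n → ℝ) (hw : ∀ j, w j = ∑ i, A i j)
    (θ θ' : Fin n → ℝ)
    (hmd : ∀ j, w j * Real.exp (θ' j) =
      w j * Real.exp (θ j) -
        ∑ i, A i j * Real.exp (θ j) *
          (1 - y i / (A.mulVec (fun j' => Real.exp (θ j')) i))) :
    ∀ j, Real.exp (θ' j) =
      Real.exp (θ j) *
        (∑ i, A i j * (y i / (A.mulVec (fun j' => Real.exp (θ j')) i))) / w j := by
  intro j
  obtain ⟨i₀, hi₀⟩ := hcol j
  have hwpos : 0 < w j := by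
    rw [hw]
    exact Finset.sum_pos' (fun i _ => hA i j) ⟨i₀, Finset.mem_univ i₀, hi₀⟩
  have h := hmd j
  have key : w j * Real.exp (θ' j) =
      Real.exp (θ j) * ∑ i, A i j * (y i / (A.mulVec (fun j' => Real.exp (θ j')) i)) := by
    rw [h, hw, Finset.sum_mul, ← Finset.sum_sub_distrib, Finset.mul_sum]
    apply Finset.sum_congr rfl
    intro i _
    ring
  rw [eq_div_iff hwpos.ne']
  linarith [key]
end

section
/- The Bregman divergence of 𝒜(θ) = Σ_j w_j e^{θ_j} between log x and log x⁰ equals, up to an additive constant independent of x, Σ_j w_j x_j - Σ_j w_j x_j⁰ log x_j; consequently the Bregman projection of θ⁰ = log x⁰ onto C_θ = {θ : e^θ ∈ C} in the θ-variable equals log of the Bregman projection of x⁰ onto C with respect to u(x) = -Σ_j w_j x_j⁰ log x_j (weighted Burg entropy). -/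
open Real Finset

/-- Bregman divergence of 𝒜(θ) = Σⱼ wⱼ e^{θⱼ}. -/
noncomputable def DA {n : ℕ} (w θ θ' : Fin n → ℝ) : ℝ :=
  ∑ j, w j * (Real.exp (θ j) - Real.exp (θ' j) - Real.exp (θ' j) * (θ j - θ' j))

/-- Bregman divergence of the weighted Burg entropy u(x) = -Σⱼ wⱼ x⁰ⱼ log xⱼ,
whose gradient at x' is (-wⱼ x⁰ⱼ / x'ⱼ)ⱼ. -/
noncomputable def Du {n : ℕ} (w x0 x x' : Fin n → ℝ) : ℝ :=
  (-∑ j, w j * x0 j * Real.log (x j)) - (-∑ j, w j * x0 j * Real.log (x' j))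
    - ∑ j, (-(w j * x0 j / x' j)) * (x j - x' j)

lemma DA_eq_sum {n : ℕ} (w x0 x : Fin n → ℝ) (hx0 : ∀ j, 0 < x0 j) (hx : ∀ j, 0 < x j) :
    DA w (fun j => Real.log (x j)) (fun j => Real.log (x0 j))
      = (∑ j, w j * x j) - (∑ j, w j * x0 j * Real.log (x j))
        + ∑ j, (w j * x0 j * Real.log (x0 j) - w j * x0 j) := by
  unfold DA
  rw [← Finset.sum_sub_distrib, ← Finset.sum_add_distrib]
  apply Finset.sum_congr rfl
  intro j _
  rw [Real.exp_log (hx j), Real.exp_log (hx0 j)]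
  ring

lemma Du_eq_sum {n : ℕ} (w x0 x : Fin n → ℝ) (hx0 : ∀ j, 0 < x0 j) :
    Du w x0 x x0
      = (∑ j, w j * x j) - (∑ j, w j * x0 j * Real.log (x j))
        + ∑ j, (w j * x0 j * Real.log (x0 j) - w j * x0 j) := by
  unfold Du
  rw [neg_sub_neg, ← Finset.sum_sub_distrib, ← Finset.sum_sub_distrib,
    ← Finset.sum_sub_distrib, ← Finset.sum_add_distrib]
  apply Finset.sum_congr rfl
  intro j _
  have h0 : x0 j ≠ 0 := (hx0 j).ne'
  field_simp
  ring

lemma DA_eq_Du {n : ℕ} (w x0 x : Fin n → ℝ) (hx0 : ∀ j, 0 < x0 j) (hx : ∀ j, 0 < x j) :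
    DA w (fun j => Real.log (x j)) (fun j => Real.log (x0 j)) = Du w x0 x x0 := by
  rw [DA_eq_sum w x0 x hx0 hx, Du_eq_sum w x0 x hx0]

/-- Proposition 7: D_𝒜(log x, log x⁰) equals Σⱼ wⱼxⱼ - Σⱼ wⱼx⁰ⱼ log xⱼ up to an additive
constant independent of x, and the Bregman projection of θ⁰ = log x⁰ onto
C_θ = {θ : e^θ ∈ C} equals the log of the Bregman projection of x⁰ onto C with respect to
the weighted Burg entropy u(x) = -Σⱼ wⱼx⁰ⱼ log xⱼ. -/
theorem bregman_projection_reparametrization {n : ℕ} (w x0 : Fin n → ℝ)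
    (hw : ∀ j, 0 < w j) (hx0 : ∀ j, 0 < x0 j)
    (C : Set (Fin n → ℝ)) (hC : Convex ℝ C) (hCpos : ∃ x ∈ C, ∀ j, 0 < x j) :
    (∃ c : ℝ, ∀ x : Fin n → ℝ, (∀ j, 0 < x j) →
        DA w (fun j => Real.log (x j)) (fun j => Real.log (x0 j))
          = (∑ j, w j * x j) - (∑ j, w j * x0 j * Real.log (x j)) + c) ∧
    (∀ xstar : Fin n → ℝ, (∀ j, 0 < xstar j) → xstar ∈ C →
      (IsMinOn (fun θ : Fin n → ℝ => DA w θ (fun j => Real.log (x0 j)))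
          {θ : Fin n → ℝ | (fun j => Real.exp (θ j)) ∈ C}
          (fun j => Real.log (xstar j)) ↔
        IsMinOn (fun x : Fin n → ℝ => Du w x0 x x0)
          (C ∩ {x : Fin n → ℝ | ∀ j, 0 < x j}) xstar)) := by
  constructor
  · exact ⟨∑ j, (w j * x0 j * Real.log (x0 j) - w j * x0 j),
      fun x hx => DA_eq_sum w x0 x hx0 hx⟩
  · intro xstar hxs hxsC
    constructor
    · intro hmin y hy
      obtain ⟨hyC, hypos⟩ := hy
      have hylog : (fun j => Real.log (y j)) ∈
          {θ : Fin n → ℝ | (fun j => Real.exp (θ j)) ∈ C} := by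
        simp only [Set.mem_setOf_eq]
        have : (fun j => Real.exp (Real.log (y j))) = y := by
          funext j; exact Real.exp_log (hypos j)
        rw [this]; exact hyC
      have := hmin hylog
      simp only [Set.mem_setOf_eq] at this ⊢
      calc Du w x0 xstar x0
          = DA w (fun j => Real.log (xstar j)) (fun j => Real.log (x0 j)) :=
            (DA_eq_Du w x0 xstar hx0 hxs).symm
        _ ≤ DA w (fun j => Real.log (y j)) (fun j => Real.log (x0 j)) := this
        _ = Du w x0 y x0 := DA_eq_Du w x0 y hx0 hypos
    · intro hmin θ hθ
      simp only [Set.mem_setOf_eq] at hθ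
      set y : Fin n → ℝ := fun j => Real.exp (θ j) with hy
      have hypos : ∀ j, 0 < y j := fun j => Real.exp_pos _
      have hylog : (fun j => Real.log (y j)) = θ := by
        funext j; exact Real.log_exp (θ j)
      have hymem : y ∈ C ∩ {x : Fin n → ℝ | ∀ j, 0 < x j} := ⟨hθ, hypos⟩
      have := hmin hymem
      simp only [Set.mem_setOf_eq] at this ⊢
      calc DA w (fun j => Real.log (xstar j)) (fun j => Real.log (x0 j))
          = Du w x0 xstar x0 := DA_eq_Du w x0 xstar hx0 hxs
        _ ≤ Du w x0 y x0 := this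
        _ = DA w (fun j => Real.log (y j)) (fun j => Real.log (x0 j)) :=
            (DA_eq_Du w x0 y hx0 hypos).symm
        _ = DA w θ (fun j => Real.log (x0 j)) := by rw [hylog]
end

section
/- Three-point descent inequality for Bregman proximal gradient (Lemma 2): under the assumptions that F is convex differentiable, u is Legendre, Lu - F is convex on int(dom u), and the Bregman proximal map T_τ with τ = 1/L is single-valued mapping int(dom u) to itself, for every x ∈ int(dom u) with x⁺ = T_τ(x) and every s ∈ dom u, one has τ(F(x⁺) - F(s)) ≤ D_u(s, x) - D_u(s, x⁺). -/
/-!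
At an interior minimiser the optimality condition of the proximal step is the mirror step
`∇u(x⁺) = ∇u(x) - τ ∇F(x)`. The three-point identity for Bregman divergences then turns
`D(s, x) - D(s, x⁺)` into `D(x⁺, x) + τ ⟪∇F(x), x⁺ - s⟫`. Convexity of `L u - F` bounds
`τ (F(x⁺) - F(x) - ⟪∇F(x), x⁺ - x⟫)` by `D(x⁺, x)`, convexity of `F` gives
`F(x) + ⟪∇F(x), s - x⟫ ≤ F(s)`, and adding the two yields the claim.
-/

open InnerProductSpace

theorem ConvexOn.add_apply_sub_le_of_hasFDerivAt {E : Type*} [NormedAddCommGroup E]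
    [NormedSpace ℝ E] {s : Set E} {f : E → ℝ} {f' : E →L[ℝ] ℝ} {x y : E}
    (hf : ConvexOn ℝ s f) (hx : x ∈ s) (hy : y ∈ s) (hd : HasFDerivAt f f' x) :
    f x + f' (y - x) ≤ f y := by
  have hd' : HasFDerivAt f f' (AffineMap.lineMap x y (0 : ℝ)) := by simpa using hd
  have hslope := (hf.comp_affineMap (AffineMap.lineMap x y)).le_slope_of_hasDerivAt
    (by simpa using hx) (by simpa using hy) zero_lt_one
    (by simpa using hd'.comp_hasDerivAt (0 : ℝ) AffineMap.hasDerivAt_lineMap)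
  simp only [slope_def_field, Function.comp_apply, AffineMap.lineMap_apply_zero,
    AffineMap.lineMap_apply_one, sub_zero, div_one] at hslope
  linarith [f'.map_sub y x]

section InnerProductSpace

variable {E : Type*} [NormedAddCommGroup E] [InnerProductSpace ℝ E]

/-- The Bregman divergence `D_u(y, x)`, where `u'` is the gradient of `u`. -/
def bregmanDiv (u : E → ℝ) (u' : E → E) (y x : E) : ℝ :=
  u y - u x - ⟪u' x, y - x⟫_ℝ

theorem bregmanDiv_sub_bregmanDiv (u : E → ℝ) (u' : E → E) (s x z : E) :
    bregmanDiv u u' s x - bregmanDiv u u' s z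
      = bregmanDiv u u' z x + ⟪u' z - u' x, s - z⟫_ℝ := by
  simp only [bregmanDiv, inner_sub_left, inner_sub_right]
  ring

variable [CompleteSpace E]

theorem ConvexOn.add_inner_sub_le_of_hasGradientAt {s : Set E} {f : E → ℝ} {g x y : E}
    (hf : ConvexOn ℝ s f) (hx : x ∈ s) (hy : y ∈ s) (hd : HasGradientAt f g x) :
    f x + ⟪g, y - x⟫_ℝ ≤ f y := by
  simpa using hf.add_apply_sub_le_of_hasFDerivAt hx hy (hasGradientAt_iff_hasFDerivAt.mp hd)

theorem IsLocalMin.hasGradientAt_eq_zero {f : E → ℝ} {g a : E} (h : IsLocalMin f a)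
    (hf : HasGradientAt f g a) : g = 0 :=
  (toDual ℝ E).map_eq_zero_iff.mp (h.hasFDerivAt_eq_zero (hasGradientAt_iff_hasFDerivAt.mp hf))

theorem hasGradientAt_inner_sub (g y z : E) : HasGradientAt (fun w => ⟪g, w - y⟫_ℝ) g z := by
  rw [hasGradientAt_iff_hasFDerivAt]
  simpa [inner_sub_right] using ((toDual ℝ E g).hasFDerivAt (x := z)).sub_const ⟪g, y⟫_ℝ

/-- The descent lemma for `F` that is `L`-smooth relative to `u`. -/
theorem ConvexOn.sub_sub_inner_le_mul_bregmanDiv {t : Set E} {F u : E → ℝ} {u' : E → E}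
    {g x y : E} {L : ℝ} (h : ConvexOn ℝ t (fun z => L * u z - F z)) (hx : x ∈ t) (hy : y ∈ t)
    (hF : HasGradientAt F g x) (hu : HasGradientAt u (u' x) x) :
    F y - F x - ⟪g, y - x⟫_ℝ ≤ L * bregmanDiv u u' y x := by
  have hd := ((hasGradientAt_iff_hasFDerivAt.mp hu).const_mul L).sub
    (hasGradientAt_iff_hasFDerivAt.mp hF)
  have key := h.add_apply_sub_le_of_hasFDerivAt hx hy hd
  simp only [sub_apply, smul_apply, toDual_apply_apply, smul_eq_mul] at key
  simp only [bregmanDiv]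
  linarith

/-- The objective whose minimiser is the Bregman proximal step `T_τ(y)`, with `g = ∇F(y)`. -/
noncomputable def bregmanProxObjective (g : E) (τ : ℝ) (u : E → ℝ) (u' : E → E) (y : E) : E → ℝ :=
  fun x => ⟪g, x - y⟫_ℝ + (1 / τ) * bregmanDiv u u' x y

theorem hasGradientAt_bregmanProxObjective {g y z : E} {τ : ℝ} {u : E → ℝ} {u' : E → E}
    (hu : HasGradientAt u (u' z) z) :
    HasGradientAt (bregmanProxObjective g τ u u' y) (g + (1 / τ) • (u' z - u' y)) z := by
  rw [hasGradientAt_iff_hasFDerivAt] at hu ⊢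
  have hD := ((hu.sub_const (u y)).sub
    (hasGradientAt_iff_hasFDerivAt.mp (hasGradientAt_inner_sub (u' y) y z))).const_mul (1 / τ)
  rw [map_add, map_smul, map_sub]
  exact (hasGradientAt_iff_hasFDerivAt.mp (hasGradientAt_inner_sub g y z)).add hD

theorem sub_eq_neg_smul_of_isMinOn_bregmanProxObjective {s : Set E} {g y z : E} {τ : ℝ}
    {u : E → ℝ} {u' : E → E} (hmin : IsMinOn (bregmanProxObjective g τ u u' y) s z)
    (hz : z ∈ interior s) (hu : HasGradientAt u (u' z) z) (hτ : τ ≠ 0) :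
    u' z - u' y = -τ • g := by
  have hzero := (hmin.isLocalMin (mem_interior_iff_mem_nhds.mp hz)).hasGradientAt_eq_zero
    (hasGradientAt_bregmanProxObjective hu)
  have := congrArg (τ • ·) hzero
  simp only [smul_add, smul_smul, mul_one_div_cancel hτ, one_smul, smul_zero] at this
  rw [neg_smul, eq_neg_iff_add_eq_zero, add_comm, this]

end InnerProductSpace

theorem bregman_proximal_three_point_descent_general {d : ℕ}
    (s : Set (EuclideanSpace ℝ (Fin d)))
    (F u : EuclideanSpace ℝ (Fin d) → ℝ)
    (F' u' : EuclideanSpace ℝ (Fin d) → EuclideanSpace ℝ (Fin d))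
    (T : EuclideanSpace ℝ (Fin d) → EuclideanSpace ℝ (Fin d))
    (L τ : ℝ) (hL : 0 < L) (hτ : τ = 1 / L)
    (hFconv : ConvexOn ℝ s F)
    (hFdiff : ∀ y ∈ interior s, HasGradientAt F (F' y) y)
    (hudiff : ∀ y ∈ interior s, HasGradientAt u (u' y) y)
    (hrelsmooth : ConvexOn ℝ (interior s) (fun x => L * u x - F x))
    (hTmem : ∀ y ∈ interior s, T y ∈ interior s)
    (hTmin : ∀ y ∈ interior s,
      IsMinOn (fun x => (inner ℝ (F' y) (x - y) : ℝ)
        + (1 / τ) * (u x - u y - inner ℝ (u' y) (x - y))) s (T y)) :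
    ∀ x ∈ interior s, ∀ s' ∈ s,
      τ * (F (T x) - F s')
        ≤ (u s' - u x - inner ℝ (u' x) (s' - x))
          - (u s' - u (T x) - inner ℝ (u' (T x)) (s' - T x)) := by
  intro x hx s' hs'
  have hτpos : 0 < τ := hτ ▸ one_div_pos.mpr hL
  have hτL : τ * L = 1 := by rw [hτ]; field_simp
  have hTx := hTmem x hx
  have hstep : u' (T x) - u' x = -τ • F' x :=
    sub_eq_neg_smul_of_isMinOn_bregmanProxObjective (hTmin x hx) hTx (hudiff _ hTx) hτpos.ne'
  have hdescent := mul_le_mul_of_nonneg_left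
    (hrelsmooth.sub_sub_inner_le_mul_bregmanDiv hx hTx (hFdiff x hx) (hudiff x hx)) hτpos.le
  rw [← mul_assoc, hτL, one_mul] at hdescent
  have hconv := hFconv.add_inner_sub_le_of_hasGradientAt (interior_subset hx) hs' (hFdiff x hx)
  have hsplit : ⟪F' x, s' - T x⟫_ℝ = ⟪F' x, s' - x⟫_ℝ - ⟪F' x, T x - x⟫_ℝ := by
    rw [← inner_sub_right, sub_sub_sub_cancel_right]
  change τ * _ ≤ bregmanDiv u u' s' x - bregmanDiv u u' s' (T x)
  rw [bregmanDiv_sub_bregmanDiv, hstep, real_inner_smul_left, hsplit]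
  linarith [mul_le_mul_of_nonneg_left hconv hτpos.le]

/-- Three-point descent inequality for the Bregman proximal gradient step (Lemma 2):
with dom u = s, F convex and differentiable on int s with gradient F', u of Legendre type
(strictly convex on int s, differentiable there with gradient u'), Lu - F convex on int s,
τ = 1/L, and T the single-valued Bregman proximal map sending int s to itself, one has
τ(F(x⁺) - F(s')) ≤ D_u(s', x) - D_u(s', x⁺) for all x ∈ int s and s' ∈ s, x⁺ = T x. -/
theorem bregman_proximal_three_point_descent {d : ℕ}
    (s : Set (EuclideanSpace ℝ (Fin d)))
    (F u : EuclideanSpace ℝ (Fin d) → ℝ)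
    (F' u' : EuclideanSpace ℝ (Fin d) → EuclideanSpace ℝ (Fin d))
    (T : EuclideanSpace ℝ (Fin d) → EuclideanSpace ℝ (Fin d))
    (L τ : ℝ) (hL : 0 < L) (hτ : τ = 1 / L)
    (hsconv : Convex ℝ s)
    (hFconv : ConvexOn ℝ s F)
    (hFdiff : ∀ y ∈ interior s, HasGradientAt F (F' y) y)
    (hustrict : StrictConvexOn ℝ (interior s) u)
    (hudiff : ∀ y ∈ interior s, HasGradientAt u (u' y) y)
    (hrelsmooth : ConvexOn ℝ (interior s) (fun x => L * u x - F x))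
    (hTmem : ∀ y ∈ interior s, T y ∈ interior s)
    (hTmin : ∀ y ∈ interior s,
      IsMinOn (fun x => (inner ℝ (F' y) (x - y) : ℝ)
        + (1 / τ) * (u x - u y - inner ℝ (u' y) (x - y))) s (T y))
    (hTuniq : ∀ y ∈ interior s, ∀ z ∈ s,
      IsMinOn (fun x => (inner ℝ (F' y) (x - y) : ℝ)
        + (1 / τ) * (u x - u y - inner ℝ (u' y) (x - y))) s z → z = T y) :
    ∀ x ∈ interior s, ∀ s' ∈ s,
      τ * (F (T x) - F s')
        ≤ (u s' - u x - inner ℝ (u' x) (s' - x))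
          - (u s' - u (T x) - inner ℝ (u' (T x)) (s' - T x)) :=
  bregman_proximal_three_point_descent_general s F u F' u' T L τ hL hτ hFconv hFdiff hudiff
    hrelsmooth hTmem hTmin
end

section
/- Sublinear rate of EMML (Proposition 5): for any N ≥ 1 and any x⁰ ∈ ℝ>0^n, assuming the three-point inequality KL(y, Ax^{(r+1)}) - KL(y, Ax*) ≤ D_𝒜(log x*, log x^{(r)}) - D_𝒜(log x*, log x^{(r+1)}) holds at each EMML step and KL(y, Ax^{(r)}) is nonincreasing, the EMML iterates satisfy KL(y, Ax^N) - KL(y, Ax*) ≤ D_𝒜(log x*, log x⁰)/N, where x* minimizes x ↦ KL(y, Ax). -/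
open Real Finset

noncomputable def KL {m : ℕ} (u v : Fin m → ℝ) : ℝ :=
  ∑ i, (u i * Real.log (u i / v i) + v i - u i)

lemma DA_nonneg {n : ℕ} (w θ θ' : Fin n → ℝ) (hw : ∀ j, 0 ≤ w j) :
    0 ≤ DA w θ θ' := by
  apply Finset.sum_nonneg
  intro j _
  apply mul_nonneg (hw j)
  have h := mul_le_mul_of_nonneg_left (Real.add_one_le_exp (θ j - θ' j))
    (Real.exp_pos (θ' j)).le
  rw [← Real.exp_add, add_sub_cancel] at h
  nlinarith [Real.exp_pos (θ' j)]

/-- Proposition 5: sublinear O(1/N) rate for EMML. -/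
theorem EMML_sublinear_rate {m n : ℕ} (A : Matrix (Fin m) (Fin n) ℝ) (y : Fin m → ℝ)
    (hA : ∀ i j, 0 ≤ A i j) (hrow : ∀ i, ∃ j, 0 < A i j) (hcol : ∀ j, ∃ i, 0 < A i j)
    (hy : ∀ i, 0 ≤ y i)
    (w : Fin n → ℝ) (hw : ∀ j, w j = ∑ i, A i j)
    (x : ℕ → Fin n → ℝ) (hx0 : ∀ j, 0 < x 0 j)
    (hEMML : ∀ r : ℕ, ∀ j, x (r + 1) j
      = x r j * (∑ i, A i j * (y i / A.mulVec (x r) i)) / w j)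
    (xstar : Fin n → ℝ) (hxstar : ∀ j, 0 < xstar j)
    (hmin : IsMinOn (fun z : Fin n → ℝ => KL y (A.mulVec z))
      {z : Fin n → ℝ | ∀ j, 0 < z j} xstar)
    (hthree : ∀ r : ℕ,
      KL y (A.mulVec (x (r + 1))) - KL y (A.mulVec xstar)
        ≤ DA w (fun j => Real.log (xstar j)) (fun j => Real.log (x r j))
          - DA w (fun j => Real.log (xstar j)) (fun j => Real.log (x (r + 1) j)))
    (hmono : ∀ r : ℕ, KL y (A.mulVec (x (r + 1))) ≤ KL y (A.mulVec (x r))) :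
    ∀ N : ℕ, 1 ≤ N →
      KL y (A.mulVec (x N)) - KL y (A.mulVec xstar)
        ≤ DA w (fun j => Real.log (xstar j)) (fun j => Real.log (x 0 j)) / N := by
  intro N hN
  set f : ℕ → ℝ := fun r => KL y (A.mulVec (x r)) with hf
  set fs : ℝ := KL y (A.mulVec xstar) with hfs
  set D : ℕ → ℝ := fun r => DA w (fun j => Real.log (xstar j)) (fun j => Real.log (x r j))
    with hD
  have hwpos : ∀ j, 0 ≤ w j := fun j => (hw j) ▸ Finset.sum_nonneg (fun i _ => hA i j)
  have hDn : ∀ r, 0 ≤ D r := fun r => DA_nonneg _ _ _ hwpos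
  have key : ∀ M : ℕ, (M : ℝ) * (f M - fs) ≤ D 0 - D M := by
    intro M
    induction M with
    | zero => simp
    | succ M ih =>
      have h1 : f (M + 1) - fs ≤ f M - fs := by
        have := hmono M; simp only [hf]; linarith
      have h2 : (M : ℝ) * (f (M + 1) - fs) ≤ (M : ℝ) * (f M - fs) :=
        mul_le_mul_of_nonneg_left h1 (Nat.cast_nonneg M)
      have h3 := hthree M
      push_cast
      nlinarith
  have hNpos : (0 : ℝ) < N := by exact_mod_cast hN
  rw [div_eq_inv_mul, le_inv_mul_iff₀ hNpos]
  have h1 : (N : ℝ) * (KL y (A.mulVec (x N)) - fs)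
      ≤ (DA w (fun j => Real.log (xstar j)) fun j => Real.log (x 0 j)) - D N := key N
  have h2 := hDn N
  linarith
end

section
/- Relative smoothness for EMML: the function ℒ(θ) = KL(y, Ae^θ) is 1-relatively smooth with respect to 𝒜(θ) = Σ_{i,j} A_{ij} e^{θ_j} on ℝ^n when 0 ≤ yᵢ ≤ (Ae^θ)ᵢ is not required; precisely, 𝒜 - ℒ is convex on ℝ^n. -/
open Real Finset

/-!
Since `(Ae^θ)ᵢ > 0`, `𝒜 - ℒ` is a constant plus `Σᵢ yᵢ log (Ae^θ)ᵢ`, a nonnegative combination of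
log-sum-exp functions with nonnegative weights. Their convexity reduces to that of `exp`: with
`u = log Σⱼ cⱼ e^{xⱼ}` and `v = log Σⱼ cⱼ e^{zⱼ}`,
`Σⱼ cⱼ e^{a xⱼ + b zⱼ} ≤ e^{a u + b v} Σⱼ cⱼ (a e^{xⱼ - u} + b e^{zⱼ - v}) = e^{a u + b v}`.
-/

theorem ConvexOn.sum {𝕜 E β ι : Type*} [Semiring 𝕜] [PartialOrder 𝕜] [AddCommMonoid E]
    [AddCommMonoid β] [PartialOrder β] [IsOrderedAddMonoid β] [SMul 𝕜 E] [Module 𝕜 β]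
    {s : Set E} (hs : Convex 𝕜 s) (t : Finset ι) {f : ι → E → β}
    (hf : ∀ i ∈ t, ConvexOn 𝕜 s (f i)) : ConvexOn 𝕜 s fun x => ∑ i ∈ t, f i x := by
  classical
  induction t using Finset.induction_on with
  | empty => simpa using convexOn_const 0 hs
  | insert a t ha ih =>
    simp only [sum_insert ha]
    exact (hf a (mem_insert_self a t)).add (ih fun i hi => hf i (mem_insert_of_mem hi))

theorem sum_mul_exp_pos {ι : Type*} [Fintype ι] {c : ι → ℝ} (hc : ∀ j, 0 ≤ c j)
    (hc' : ∃ j, 0 < c j) (θ : ι → ℝ) : 0 < ∑ j, c j * exp (θ j) :=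
  let ⟨j, hj⟩ := hc'
  sum_pos' (fun j _ => mul_nonneg (hc j) (exp_pos _).le) ⟨j, mem_univ j, mul_pos hj (exp_pos _)⟩

theorem convexOn_log_sum_mul_exp {ι : Type*} [Fintype ι] {c : ι → ℝ} (hc : ∀ j, 0 ≤ c j)
    (hc' : ∃ j, 0 < c j) :
    ConvexOn ℝ Set.univ fun θ : ι → ℝ => log (∑ j, c j * exp (θ j)) := by
  refine ⟨convex_univ, fun x _ z _ a b ha hb hab => ?_⟩
  have hF := sum_mul_exp_pos hc hc'
  set u := log (∑ j, c j * exp (x j))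
  set v := log (∑ j, c j * exp (z j))
  rw [smul_eq_mul, smul_eq_mul, log_le_iff_le_exp (hF _)]
  have hexp_le : ∀ j, exp ((a • x + b • z) j) ≤
      exp (a * u + b * v) * (a * exp (x j - u) + b * exp (z j - v)) := by
    intro j
    have h := convexOn_exp.2 (Set.mem_univ (x j - u)) (Set.mem_univ (z j - v)) ha hb hab
    simp only [smul_eq_mul] at h
    rw [← div_le_iff₀' (exp_pos _), ← exp_sub]
    convert h using 2
    simp only [Pi.add_apply, Pi.smul_apply, smul_eq_mul]
    ring
  calc ∑ j, c j * exp ((a • x + b • z) j)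
      ≤ ∑ j, c j * (exp (a * u + b * v) * (a * exp (x j - u) + b * exp (z j - v))) :=
        sum_le_sum fun j _ => mul_le_mul_of_nonneg_left (hexp_le j) (hc j)
    _ = exp (a * u + b * v) * (a * (∑ j, c j * exp (x j)) / exp u
          + b * (∑ j, c j * exp (z j)) / exp v) := by
        simp only [exp_sub, mul_sum, sum_div, ← sum_add_distrib]
        exact sum_congr rfl fun j _ => by ring
    _ = exp (a * u + b * v) := by
        rw [exp_log (hF x), exp_log (hF z), mul_div_assoc, mul_div_assoc,
          div_self (hF x).ne', div_self (hF z).ne']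
        simp [hab]

theorem sum_sub_KL {m : ℕ} (u v : Fin m → ℝ) (hv : ∀ i, v i ≠ 0) :
    ∑ i, v i - KL u v = ∑ i, (u i - u i * log (u i) + u i * log (v i)) := by
  rw [KL, ← sum_sub_distrib]
  refine sum_congr rfl fun i _ => ?_
  rcases eq_or_ne (u i) 0 with hu | hu
  · simp [hu]
  · rw [log_div hu (hv i)]
    ring

theorem EMML_relative_smoothness_general {m n : ℕ} (A : Matrix (Fin m) (Fin n) ℝ) (y : Fin m → ℝ)
    (hA : ∀ i j, 0 ≤ A i j) (hrow : ∀ i, ∃ j, 0 < A i j)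
    (hy : ∀ i, 0 ≤ y i) :
    ConvexOn ℝ Set.univ (fun θ : Fin n → ℝ =>
      (∑ i, ∑ j, A i j * Real.exp (θ j))
        - KL y (A.mulVec (fun j => Real.exp (θ j)))) := by
  have hobjective : (fun θ : Fin n → ℝ => (∑ i, ∑ j, A i j * exp (θ j))
      - KL y (A.mulVec fun j => exp (θ j))) = fun θ =>
      ∑ i, (y i - y i * log (y i) + y i * log (∑ j, A i j * exp (θ j))) := by
    funext θ
    exact sum_sub_KL y _ fun i => (sum_mul_exp_pos (hA i) (hrow i) θ).ne'
  rw [hobjective]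
  exact ConvexOn.sum convex_univ _ fun i _ =>
    (convexOn_const _ convex_univ).add ((convexOn_log_sum_mul_exp (hA i) (hrow i)).smul (hy i))

/-- Relative smoothness of ℒ(θ) = KL(y, Ae^θ) with respect to 𝒜(θ) = Σ_{i,j} Aᵢⱼ e^{θⱼ}:
the difference 𝒜 - ℒ is convex on ℝⁿ. -/
theorem EMML_relative_smoothness {m n : ℕ} (A : Matrix (Fin m) (Fin n) ℝ) (y : Fin m → ℝ)
    (hA : ∀ i j, 0 ≤ A i j) (hrow : ∀ i, ∃ j, 0 < A i j) (hcol : ∀ j, ∃ i, 0 < A i j)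
    (hy : ∀ i, 0 ≤ y i) :
    ConvexOn ℝ Set.univ (fun θ : Fin n → ℝ =>
      (∑ i, ∑ j, A i j * Real.exp (θ j))
        - KL y (A.mulVec (fun j => Real.exp (θ j)))) :=
  EMML_relative_smoothness_general A y hA hrow hy
end
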